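/- In the WeightedERM high-dimensional setting, assume M is strictly convex and smooth with 0 < M′′ bounded above and M′′′, ∂₁₂M, ∂₂M′′ bounded (Assumption 1 parts 1 and 3), and q is Lipschitz. Then there exist constants C₁, C₂ > 0 such that for every ℓ ∈ [L], every ε ∈ ℝ, and every ϑ ∈ (0, ∞): E[M′(prox_{bϑM(·, q(Z₁, Ψ_{η_ℓ}, ε))}(Z₁·λ^{(ℓ)} + w₁^{(ℓ)}), q(Z₁, Ψ_{η_ℓ}, ε))²] ≤ C₁ + C₂ε², where Z₁ ~ N(0, Γ) and w₁^{(ℓ)} ~ N(0, κ_{ℓ,ℓ}) are independent. -/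

import Mathlib

open MeasureTheory ProbabilityTheory
open scoped BigOperators NNReal

noncomputable section

/-- Matrix-vector multiplication for plain function-typed matrices. -/
def mvec {a b : ℕ} (A : Fin a → Fin b → ℝ) (v : Fin b → ℝ) : Fin a → ℝ :=
  fun i => ∑ j, A i j * v j

/-- Proximal operator: a minimizer of `t ↦ ρ * f t + (t - z)^2 / 2`. -/
def prox (ρ : ℝ) (f : ℝ → ℝ) (z : ℝ) : ℝ :=
  Classical.epsilon fun t => ∀ s, ρ * f t + (t - z) ^ 2 / 2 ≤ ρ * f s + (s - z) ^ 2 / 2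

/-- Standard Gaussian measure on ℝ^k. -/
def stdGaussian (k : ℕ) : Measure (Fin k → ℝ) :=
  Measure.pi fun _ => gaussianReal 0 1

/-- Centered Gaussian measure on ℝ^k with covariance matrix K (junk value `0`
if K is not positive semidefinite). -/
def gaussianCov {k : ℕ} (K : Fin k → Fin k → ℝ) : Measure (Fin k → ℝ) :=
  haveI := Classical.propDecidable ((Matrix.of K).PosSemidef)
  if h : (Matrix.of K).PosSemidef then
    (stdGaussian k).map fun g => mvec (fun i j => ((h.1.eigenvectorUnitary : Matrix (Fin k) (Fin k) ℝ) *
      Matrix.diagonal (fun x => Real.sqrt (h.1.eigenvalues x)) *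
      (star h.1.eigenvectorUnitary : Matrix (Fin k) (Fin k) ℝ)) i j) g
  else 0

/-! At `p = prox_{ρ f}(x)` the first-order condition `ρ f'(p) = x - p`, together with the
monotonicity of `f'`, forces `|f'(p)| ≤ |f'(x)|`: the proximal step never increases `|M′|`.
Bounded `∂₁M′` and `∂₂M′` give `M′` linear growth and `q` is Lipschitz, so the integrand is
at most `(α + γ|ε| + β‖z‖ + B₂|w|)²`. Gaussian measures have finite second moments (Fernique),
so integrating gives `C + 6γ²ε²`, with `C` depending on `ℓ` only through finitely many values. -/

open Set Filter

section Prox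

variable {f f' : ℝ → ℝ}

theorem add_deriv_mul_sub_le_of_monotone (hf : ∀ x, HasDerivAt f (f' x) x) (hmono : Monotone f')
    (x y : ℝ) : f x + f' x * (y - x) ≤ f y := by
  have hderiv : deriv f = f' := funext fun x => (hf x).deriv
  have hconv : ConvexOn ℝ univ f :=
    Monotone.convexOn_univ_of_deriv (fun x => (hf x).differentiableAt) (hderiv ▸ hmono)
  rcases lt_trichotomy x y with hxy | rfl | hxy
  · have h := hconv.le_slope_of_hasDerivAt (mem_univ x) (mem_univ y) hxy (hf x)
    rw [slope_def_field, le_div_iff₀ (sub_pos.2 hxy)] at h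
    linarith
  · simp
  · have h := hconv.slope_le_of_hasDerivAt (mem_univ y) (mem_univ x) hxy (hf x)
    rw [slope_def_field, div_le_iff₀ (sub_pos.2 hxy)] at h
    linarith

theorem exists_forall_prox_objective_le (hf : ∀ x, HasDerivAt f (f' x) x)
    (hmono : Monotone f') {ρ : ℝ} (hρ : 0 ≤ ρ) (z : ℝ) :
    ∃ t, ∀ s, ρ * f t + (t - z) ^ 2 / 2 ≤ ρ * f s + (s - z) ^ 2 / 2 := by
  have hcont : Continuous f := continuous_iff_continuousAt.2 fun x => (hf x).continuousAt
  refine Continuous.exists_forall_le' (by fun_prop) z <| mem_of_superset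
    (isCompact_closedBall z (2 * ρ * |f' z|)).compl_mem_cocompact fun s hs => ?_
  -- far from `z`, the tangent line at `z` keeps the objective above its value at `z`
  have hfar : 2 * ρ * |f' z| < |s - z| := by simpa [Real.dist_eq] using hs
  have htangent := mul_le_mul_of_nonneg_left (add_deriv_mul_sub_le_of_monotone hf hmono z s) hρ
  have hlin : -(ρ * |f' z| * |s - z|) ≤ ρ * (f' z * (s - z)) := by
    have := mul_le_mul_of_nonneg_left (neg_abs_le (f' z * (s - z))) hρ
    rw [abs_mul] at this
    linarith
  have hquad : ρ * |f' z| * |s - z| ≤ (s - z) ^ 2 / 2 := by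
    nlinarith [mul_le_mul_of_nonneg_right hfar.le (abs_nonneg (s - z)), sq_abs (s - z)]
  simp only [mem_ofPred_eq, sub_self]
  linarith

theorem prox_objective_le (hf : ∀ x, HasDerivAt f (f' x) x) (hmono : Monotone f') {ρ : ℝ}
    (hρ : 0 ≤ ρ) (z s : ℝ) :
    ρ * f (prox ρ f z) + (prox ρ f z - z) ^ 2 / 2 ≤ ρ * f s + (s - z) ^ 2 / 2 :=
  Classical.epsilon_spec (exists_forall_prox_objective_le hf hmono hρ z) s

theorem mul_deriv_prox_add_sub_eq_zero (hf : ∀ x, HasDerivAt f (f' x) x) (hmono : Monotone f')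
    {ρ : ℝ} (hρ : 0 ≤ ρ) (z : ℝ) : ρ * f' (prox ρ f z) + (prox ρ f z - z) = 0 := by
  set t := prox ρ f z
  have hsq : HasDerivAt (fun s => (s - z) ^ 2 / 2) (t - z) t := by
    simpa using (((hasDerivAt_id t).sub_const z).pow 2).div_const 2
  have hobj : HasDerivAt (fun s => ρ * f s + (s - z) ^ 2 / 2) (ρ * f' t + (t - z)) t :=
    ((hf t).const_mul ρ).add hsq
  exact IsLocalMin.hasDerivAt_eq_zero (Eventually.of_forall (prox_objective_le hf hmono hρ z)) hobj

theorem abs_deriv_prox_le (hf : ∀ x, HasDerivAt f (f' x) x) (hmono : Monotone f') {ρ : ℝ}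
    (hρ : 0 < ρ) (z : ℝ) : |f' (prox ρ f z)| ≤ |f' z| := by
  have hfix := mul_deriv_prox_add_sub_eq_zero hf hmono hρ.le z
  rcases le_total (prox ρ f z) z with hle | hle
  · have hnonneg : 0 ≤ f' (prox ρ f z) := by nlinarith
    rw [abs_of_nonneg hnonneg]
    exact (hmono hle).trans (le_abs_self _)
  · have hnonpos : f' (prox ρ f z) ≤ 0 := by nlinarith
    rw [abs_of_nonpos hnonpos]
    exact (neg_le_neg (hmono hle)).trans (neg_le_abs _)

end Prox

section Growth

theorem abs_sub_le_of_abs_deriv_le {f f' : ℝ → ℝ} {C : ℝ} (hf : ∀ x, HasDerivAt f (f' x) x)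
    (hC : ∀ x, |f' x| ≤ C) (x y : ℝ) : |f x - f y| ≤ C * |x - y| :=
  convex_univ.norm_image_sub_le_of_norm_hasDerivWithin_le (fun u _ => (hf u).hasDerivWithinAt)
    (fun u _ => hC u) (mem_univ y) (mem_univ x)

theorem abs_le_of_abs_partialDeriv_le {F F₁ F₂ : ℝ → ℝ → ℝ} {B₁ B₂ : ℝ}
    (h₁ : ∀ u v, HasDerivAt (F · v) (F₁ u v) u) (h₂ : ∀ u v, HasDerivAt (F u ·) (F₂ u v) v)
    (hB₁ : ∀ u v, |F₁ u v| ≤ B₁) (hB₂ : ∀ u v, |F₂ u v| ≤ B₂) (x v : ℝ) :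
    |F x v| ≤ |F 0 0| + B₁ * |x| + B₂ * |v| := by
  have hx := abs_sub_le_of_abs_deriv_le (h₁ · v) (hB₁ · v) x 0
  have hv := abs_sub_le_of_abs_deriv_le (h₂ 0) (hB₂ 0) v 0
  have htri := abs_sub_le (F x v) (F 0 v) (F 0 0)
  simp only [sub_zero] at hx hv
  linarith [abs_sub_abs_le_abs_sub (F x v) (F 0 0)]

theorem LipschitzWith.abs_le_add_mul_of_uncurry {q : ℝ → ℝ → ℝ} {K : ℝ≥0}
    (hq : LipschitzWith K fun x : ℝ × ℝ => q x.1 x.2) (a e : ℝ) :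
    |q a e| ≤ |q 0 0| + K * (|a| + |e|) := by
  have hdist := hq.dist_le_mul (a, e) (0, 0)
  simp only [Prod.dist_eq, Real.dist_eq, sub_zero] at hdist
  have hmax : max |a| |e| ≤ |a| + |e| := max_le (by simp) (by simp)
  nlinarith [abs_sub_abs_le_abs_sub (q a e) (q 0 0), K.coe_nonneg]

theorem abs_sum_mul_le_sum_abs_mul_norm {ι : Type*} [Fintype ι] (z c : ι → ℝ) :
    |∑ k, z k * c k| ≤ (∑ k, |c k|) * ‖z‖ := by
  rw [Finset.sum_mul]
  refine (Finset.abs_sum_le_sum_abs _ _).trans (Finset.sum_le_sum fun k _ => ?_)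
  rw [abs_mul, mul_comm]
  exact mul_le_mul_of_nonneg_left ((Real.norm_eq_abs (z k)).symm.trans_le (norm_le_pi_norm z k))
    (abs_nonneg _)

end Growth

section Gaussian

instance isGaussian_pi_gaussianReal (ι : Type*) [Fintype ι] :
    IsGaussian (Measure.pi fun _ : ι => gaussianReal 0 1) := by
  have hpi : Measure.pi (fun _ : ι => gaussianReal 0 1) =
      (ProbabilityTheory.stdGaussian (EuclideanSpace ℝ ι)).map
        (PiLp.continuousLinearEquiv 2 ℝ fun _ : ι => ℝ) := by
    rw [← map_pi_eq_stdGaussian, Measure.map_map (by fun_prop) (by fun_prop)]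
    simp [PiLp.coe_continuousLinearEquiv, Function.comp_def]
  rw [hpi]
  infer_instance

theorem mvec_eq_mulVecLin {a b : ℕ} (A : Fin a → Fin b → ℝ) :
    mvec A = (Matrix.mulVecLin (Matrix.of A)).toContinuousLinearMap := by
  ext v i
  simp [mvec, Matrix.mulVec, dotProduct]

theorem isGaussian_gaussianCov {k : ℕ} {K : Fin k → Fin k → ℝ} (hK : (Matrix.of K).PosSemidef) :
    IsGaussian (gaussianCov K) := by
  rw [gaussianCov, dif_pos hK, mvec_eq_mulVecLin, _root_.stdGaussian]
  exact isGaussian_map _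

theorem integrable_norm_sq_of_isGaussian {E : Type*} [NormedAddCommGroup E] [NormedSpace ℝ E]
    [MeasurableSpace E] [BorelSpace E] [CompleteSpace E] [SecondCountableTopology E]
    (μ : Measure E) [IsGaussian μ] : Integrable (fun x => ‖x‖ ^ 2) μ :=
  IsGaussian.memLp_two_id.integrable_norm_pow two_ne_zero

end Gaussian

section Moments

variable {E F : Type*} [NormedAddCommGroup E] [MeasurableSpace E] [NormedAddCommGroup F]
  [MeasurableSpace F] {μ : Measure E} {ν : Measure F} [IsProbabilityMeasure μ]
  [IsProbabilityMeasure ν]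

theorem integral_le_add_mul_integral_norm_sq (hμ : Integrable (fun x => ‖x‖ ^ 2) μ)
    {f : E → ℝ} {a c : ℝ} (hf₀ : ∀ x, 0 ≤ f x) (hf : ∀ x, f x ≤ a + c * ‖x‖ ^ 2) :
    ∫ x, f x ∂μ ≤ a + c * ∫ x, ‖x‖ ^ 2 ∂μ := by
  have hbound : Integrable (fun x => a + c * ‖x‖ ^ 2) μ := (integrable_const a).add (hμ.const_mul c)
  calc ∫ x, f x ∂μ ≤ ∫ x, a + c * ‖x‖ ^ 2 ∂μ :=
        integral_mono_of_nonneg (.of_forall hf₀) hbound (.of_forall hf)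
    _ = a + c * ∫ x, ‖x‖ ^ 2 ∂μ := by
        rw [integral_add (integrable_const a) (hμ.const_mul c), integral_const_mul]
        simp

theorem integral_integral_sq_le_of_abs_le (hμ : Integrable (fun x => ‖x‖ ^ 2) μ)
    (hν : Integrable (fun y => ‖y‖ ^ 2) ν) {f : E → F → ℝ} {a b c : ℝ}
    (hf : ∀ x y, |f x y| ≤ a + b * ‖x‖ + c * ‖y‖) :
    ∫ x, ∫ y, f x y ^ 2 ∂ν ∂μ ≤
      3 * (a ^ 2 + b ^ 2 * ∫ x, ‖x‖ ^ 2 ∂μ + c ^ 2 * ∫ y, ‖y‖ ^ 2 ∂ν) := by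
  have hsq : ∀ x y, f x y ^ 2 ≤ 3 * (a ^ 2 + b ^ 2 * ‖x‖ ^ 2) + 3 * c ^ 2 * ‖y‖ ^ 2 := by
    intro x y
    have h := sq_le_sq' (neg_le_of_abs_le (hf x y)) (le_of_abs_le (hf x y))
    nlinarith [sq_nonneg (a - b * ‖x‖), sq_nonneg (a - c * ‖y‖), sq_nonneg (b * ‖x‖ - c * ‖y‖)]
  have hinner : ∀ x, ∫ y, f x y ^ 2 ∂ν ≤
      (3 * a ^ 2 + 3 * c ^ 2 * ∫ y, ‖y‖ ^ 2 ∂ν) + 3 * b ^ 2 * ‖x‖ ^ 2 := by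
    intro x
    have := integral_le_add_mul_integral_norm_sq hν (fun y => sq_nonneg (f x y)) (hsq x)
    linarith
  have := integral_le_add_mul_integral_norm_sq hμ (fun x => integral_nonneg fun y => sq_nonneg _)
    hinner
  linarith

end Moments

theorem abs_partialDeriv_prox_le {M M₁ M₁₁ M₁₂ : ℝ → ℝ → ℝ} {B₁₁ B₁₂ ρ : ℝ}
    (hM₁ : ∀ u v, HasDerivAt (M · v) (M₁ u v) u) (hM₁₁ : ∀ u v, HasDerivAt (M₁ · v) (M₁₁ u v) u)
    (hM₁₂ : ∀ u v, HasDerivAt (M₁ u ·) (M₁₂ u v) v) (hM₁₁_nonneg : ∀ u v, 0 ≤ M₁₁ u v)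
    (hM₁₁_le : ∀ u v, M₁₁ u v ≤ B₁₁) (hM₁₂_le : ∀ u v, |M₁₂ u v| ≤ B₁₂) (hρ : 0 < ρ) (x v : ℝ) :
    |M₁ (prox ρ (M · v) x) v| ≤ |M₁ 0 0| + B₁₁ * |x| + B₁₂ * |v| :=
  calc |M₁ (prox ρ (M · v) x) v| ≤ |M₁ x v| :=
        abs_deriv_prox_le (hM₁ · v) (monotone_of_hasDerivAt_nonneg (hM₁₁ · v) (hM₁₁_nonneg · v)) hρ x
    _ ≤ |M₁ 0 0| + B₁₁ * |x| + B₁₂ * |v| :=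
        abs_le_of_abs_partialDeriv_le hM₁₁ hM₁₂
          (fun u v => (abs_of_nonneg (hM₁₁_nonneg u v)).trans_le (hM₁₁_le u v)) hM₁₂_le x v

theorem M_deriv_prox_second_moment_bound_general (L : ℕ)
    (Γ : Fin L → Fin L → ℝ) (hΓ : (Matrix.of Γ).PosSemidef)
    (Λ : Fin L → Fin L → ℝ)      -- columns λ^{(ℓ)}
    (κ : Fin L → ℝ≥0)            -- variances κ_{ℓ,ℓ}
    (ψseg : Fin L → Fin L)       -- Ψ_{η_ℓ}: signal index on the ℓ-th segment
    (b : ℝ) (hb : 0 < b)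
    -- q Lipschitz
    (q : ℝ → ℝ → ℝ) (Cq : ℝ≥0)
    (hq : LipschitzWith Cq fun x : ℝ × ℝ => q x.1 x.2)
    -- the loss: strictly convex, smooth, with bounded derivatives
    (M M1 M2 M12 : ℝ → ℝ → ℝ)
    (hM1 : ∀ u v, HasDerivAt (fun t => M t v) (M1 u v) u)
    (hM2 : ∀ u v, HasDerivAt (fun t => M1 t v) (M2 u v) u)
    (hM12 : ∀ u v, HasDerivAt (fun w => M1 u w) (M12 u v) v)
    (hM2pos : ∀ u v, 0 < M2 u v)
    (B2 B12 : ℝ)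
    (hM2bdd : ∀ u v, M2 u v ≤ B2)
    (hM12bdd : ∀ u v, |M12 u v| ≤ B12) :
    ∃ C1 C2 : ℝ, 0 < C1 ∧ 0 < C2 ∧
      ∀ (ℓ : Fin L) (ε ϑ : ℝ), 0 < ϑ →
        (∫ z, (∫ w,
            (M1 (prox (b * ϑ) (fun t => M t (q (z (ψseg ℓ)) ε))
                ((∑ k, z k * Λ k ℓ) + w))
              (q (z (ψseg ℓ)) ε)) ^ 2
          ∂(gaussianReal 0 (κ ℓ))) ∂(gaussianCov Γ)) ≤ C1 + C2 * ε ^ 2 := by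
  have hB2 : 0 ≤ B2 := (hM2pos 0 0).le.trans (hM2bdd 0 0)
  have hB12 : 0 ≤ B12 := (abs_nonneg _).trans (hM12bdd 0 0)
  have := isGaussian_gaussianCov hΓ
  set α := |M1 0 0| + B12 * |q 0 0|
  set γ := B12 * Cq
  set β : Fin L → ℝ := fun ℓ => B2 * ∑ k, |Λ k ℓ| + γ
  obtain ⟨C1, hC1⟩ := Finite.exists_le fun ℓ => 6 * α ^ 2 + 3 * (β ℓ ^ 2 *
    ∫ z, ‖z‖ ^ 2 ∂gaussianCov Γ + B2 ^ 2 * ∫ w, ‖w‖ ^ 2 ∂gaussianReal 0 (κ ℓ))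
  refine ⟨max C1 1, 6 * γ ^ 2 + 1, by positivity, by positivity, fun ℓ ε ϑ hϑ => ?_⟩
  have hpointwise : ∀ (z : Fin L → ℝ) (w : ℝ),
      |M1 (prox (b * ϑ) (fun t => M t (q (z (ψseg ℓ)) ε)) ((∑ k, z k * Λ k ℓ) + w))
        (q (z (ψseg ℓ)) ε)| ≤ (α + γ * |ε|) + β ℓ * ‖z‖ + B2 * ‖w‖ := by
    intro z w
    have hx : |(∑ k, z k * Λ k ℓ) + w| ≤ (∑ k, |Λ k ℓ|) * ‖z‖ + ‖w‖ :=
      (abs_add_le _ _).trans (add_le_add (abs_sum_mul_le_sum_abs_mul_norm z _) le_rfl)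
    have hv := hq.abs_le_add_mul_of_uncurry (z (ψseg ℓ)) ε
    have hz : |z (ψseg ℓ)| ≤ ‖z‖ := (Real.norm_eq_abs _).symm.trans_le (norm_le_pi_norm z _)
    refine (abs_partialDeriv_prox_le hM1 hM2 hM12 (fun u v => (hM2pos u v).le) hM2bdd hM12bdd
      (mul_pos hb hϑ) _ _).trans ?_
    nlinarith [mul_le_mul_of_nonneg_left hx hB2, mul_le_mul_of_nonneg_left hv hB12,
      mul_le_mul_of_nonneg_left hz (mul_nonneg hB12 Cq.coe_nonneg)]
  calc _ ≤ 3 * ((α + γ * |ε|) ^ 2 + β ℓ ^ 2 * ∫ z, ‖z‖ ^ 2 ∂gaussianCov Γ +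
        B2 ^ 2 * ∫ w, ‖w‖ ^ 2 ∂gaussianReal 0 (κ ℓ)) :=
        integral_integral_sq_le_of_abs_le (integrable_norm_sq_of_isGaussian _)
          (integrable_norm_sq_of_isGaussian _) hpointwise
    _ ≤ max C1 1 + (6 * γ ^ 2 + 1) * ε ^ 2 := by
        nlinarith [hC1 ℓ, le_max_left C1 1, sq_nonneg (α - γ * |ε|), sq_abs ε, sq_nonneg ε]

/-- Lemma: a uniform second-moment bound on M′ at the
proximal point. Under the smoothness/boundedness parts of Assumption 1 and a
Lipschitz link q, there are constants C₁, C₂ > 0 such that for every ℓ ∈ [L],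
every ε ∈ ℝ and every ϑ ∈ (0, ∞),
  E[M′(prox_{bϑM(·, q(Z₁, Ψ_{η_ℓ}, ε))}(Z₁·λ^{(ℓ)} + w₁^{(ℓ)}),
        q(Z₁, Ψ_{η_ℓ}, ε))²] ≤ C₁ + C₂ ε²,
with Z₁ ~ N(0, Γ) and w₁^{(ℓ)} ~ N(0, κ_{ℓ,ℓ}) independent. -/
theorem M_deriv_prox_second_moment_bound (L : ℕ)
    (Γ : Fin L → Fin L → ℝ) (hΓ : (Matrix.of Γ).PosSemidef)
    (Λ : Fin L → Fin L → ℝ)      -- columns λ^{(ℓ)}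
    (κ : Fin L → ℝ≥0)            -- variances κ_{ℓ,ℓ}
    (ψseg : Fin L → Fin L)       -- Ψ_{η_ℓ}: signal index on the ℓ-th segment
    (b : ℝ) (hb : 0 < b)
    -- q Lipschitz
    (q : ℝ → ℝ → ℝ) (Cq : ℝ≥0)
    (hq : LipschitzWith Cq fun x : ℝ × ℝ => q x.1 x.2)
    -- the loss: strictly convex, smooth, with bounded derivatives
    (M M1 M2 M3 M12 M2v : ℝ → ℝ → ℝ)
    (hMsc : ∀ v, StrictConvexOn ℝ Set.univ fun t => M t v)
    (hM1 : ∀ u v, HasDerivAt (fun t => M t v) (M1 u v) u)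
    (hM2 : ∀ u v, HasDerivAt (fun t => M1 t v) (M2 u v) u)
    (hM3 : ∀ u v, HasDerivAt (fun t => M2 t v) (M3 u v) u)
    (hM12 : ∀ u v, HasDerivAt (fun w => M1 u w) (M12 u v) v)
    (hM2v : ∀ u v, HasDerivAt (fun w => M2 u w) (M2v u v) v)
    (hM2pos : ∀ u v, 0 < M2 u v)
    (B2 B3 B12 B2v : ℝ)
    (hM2bdd : ∀ u v, M2 u v ≤ B2)
    (hM3bdd : ∀ u v, |M3 u v| ≤ B3)
    (hM12bdd : ∀ u v, |M12 u v| ≤ B12)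
    (hM2vbdd : ∀ u v, |M2v u v| ≤ B2v) :
    ∃ C1 C2 : ℝ, 0 < C1 ∧ 0 < C2 ∧
      ∀ (ℓ : Fin L) (ε ϑ : ℝ), 0 < ϑ →
        (∫ z, (∫ w,
            (M1 (prox (b * ϑ) (fun t => M t (q (z (ψseg ℓ)) ε))
                ((∑ k, z k * Λ k ℓ) + w))
              (q (z (ψseg ℓ)) ε)) ^ 2
          ∂(gaussianReal 0 (κ ℓ))) ∂(gaussianCov Γ)) ≤ C1 + C2 * ε ^ 2 :=
  M_deriv_prox_second_moment_bound_general L Γ hΓ Λ κ ψseg b hb q Cq hq M M1 M2 M12 hM1 hM2 hM12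
    hM2pos B2 B12 hM2bdd hM12bdd
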